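/- arXiv:2202.06495 — 2 statements merged into one kernel-verified Lean document; each statement's English description precedes it below -/
import Mathlib

section
/- The Laplace mechanism satisfies ε-differential privacy: if f has ℓ¹-sensitivity Δf and N(X) = f(X) + Z where Z has Laplace density (ε/(2Δf))·exp(−ε|z|/Δf), then for all neighboring datasets X₁, X₂ and all measurable S, Pr[N(X₁) ∈ S] ≤ exp(ε) · Pr[N(X₂) ∈ S]. -/
open MeasureTheory Real

/-- The Laplace mechanism `N(X) = f(X) + Z`, `Z ~ Laplace(0, Δf/ε)`, satisfies ε-DP. -/
theorem laplace_mechanism_dp {D : Type*} (Neighbor : D → D → Prop) (f : D → ℝ)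
    (ε Δf : ℝ) (hε : 0 < ε) (hΔ : 0 < Δf)
    (hsens : ∀ X₁ X₂, Neighbor X₁ X₂ → |f X₁ - f X₂| ≤ Δf)
    (N : D → Measure ℝ)
    (hN : ∀ X, ∀ S : Set ℝ, MeasurableSet S →
      N X S = ∫⁻ z in S, ENNReal.ofReal ((ε / (2 * Δf)) * Real.exp (-(ε * |z - f X|) / Δf))) :
    ∀ X₁ X₂, Neighbor X₁ X₂ → ∀ S : Set ℝ, MeasurableSet S →
      N X₁ S ≤ ENNReal.ofReal (Real.exp ε) * N X₂ S := by
  intro X₁ X₂ hnb S hS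
  rw [hN X₁ S hS, hN X₂ S hS, ← MeasureTheory.lintegral_const_mul' _ _ ENNReal.ofReal_ne_top]
  apply MeasureTheory.lintegral_mono
  intro z
  dsimp only
  rw [← ENNReal.ofReal_mul (Real.exp_pos ε).le]
  apply ENNReal.ofReal_le_ofReal
  rw [mul_comm (Real.exp ε), mul_assoc, ← Real.exp_add]
  have hc : ε / (2 * Δf) > 0 := by positivity
  apply mul_le_mul_of_nonneg_left _ hc.le
  apply Real.exp_le_exp.mpr
  have h1 : |z - f X₁| ≥ |z - f X₂| - Δf := by
    have := abs_sub_abs_le_abs_sub (z - f X₂) (z - f X₁)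
    have h2 : |z - f X₂ - (z - f X₁)| = |f X₁ - f X₂| := by ring_nf
    have := hsens X₁ X₂ hnb
    linarith
  rw [div_add' _ _ _ hΔ.ne', div_le_div_iff₀ hΔ hΔ]
  nlinarith [mul_le_mul_of_nonneg_left h1 hε.le, hΔ.le, mul_pos hε hΔ]
end

section
/- The min-max formula yields a nondecreasing sequence: for y ∈ ℝⁿ, define ŷ_k = max_{i ≤ k} min_{j ≥ i} (Σ_{l=i}^{j} y_l)/(j − i + 1). Then ŷ₁ ≤ ŷ₂ ≤ … ≤ ŷ_n. -/
/-- The min-max (constrained inference) formula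
`ŷ_k = max_{i ≤ k} min_{j ≥ i} (Σ_{l=i}^{j} y_l)/(j − i + 1)`. -/
noncomputable def minMaxIso {n : ℕ} (y : Fin n → ℝ) (k : Fin n) : ℝ :=
  Finset.sup' (Finset.Iic k) ⟨k, Finset.mem_Iic.mpr le_rfl⟩ (fun i =>
    Finset.inf' (Finset.Ici i) ⟨i, Finset.mem_Ici.mpr le_rfl⟩ (fun j =>
      (∑ l ∈ Finset.Icc i j, y l) / ((j : ℝ) - (i : ℝ) + 1)))

/-- The min-max formula yields a nondecreasing sequence. -/
theorem minMaxIso_monotone {n : ℕ} (y : Fin n → ℝ) : Monotone (minMaxIso y) := by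
  intro a b hab
  exact Finset.sup'_mono _ (Finset.Iic_subset_Iic.mpr hab) _
end
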